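/- Let {w_n} be a sequence bounded in H¹(ℝ) such that for some R > 0, sup_{y ∈ ℝ} ∫_{y−R}^{y+R} w_n² dx → 0 as n → ∞. Then for every r > 2, the L^r norms |w_n|_{L^r} converge to 0 as n → ∞. -/

import Mathlib

/-!
Where the local `L²` mass of `g ∈ H¹(ℝ)` is small, `g ^ 2` is small somewhere in each
interval of length `R` (mean value), and `g ^ 2` cannot grow much from there: by the fundamental
theorem of calculus and Young's inequality its increase is at most `a⁻¹ ∫ g ^ 2 + a ∫ g' ^ 2`
over that interval. Hence vanishing local mass with bounded energy forces `sup w_n ^ 2 → 0`,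
and then `∫ |w_n| ^ r ≤ (sup w_n ^ 2) ^ ((r - 2) / 2) ∫ w_n ^ 2 → 0`.
-/

open MeasureTheory

noncomputable section

def H1R (g : ℝ → ℝ) : Prop :=
  Differentiable ℝ g ∧ MemLp g 2 ∧ MemLp (deriv g) 2

open Set Filter Topology

namespace H1R

variable {g : ℝ → ℝ}

theorem integrable_sq (hg : H1R g) : Integrable fun t => g t ^ 2 :=
  hg.2.1.integrable_sq

theorem integrable_deriv_sq (hg : H1R g) : Integrable fun t => deriv g t ^ 2 :=
  hg.2.2.integrable_sq

theorem integrable_mul_deriv (hg : H1R g) : Integrable fun t => g t * deriv g t :=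
  hg.2.1.integrable_mul hg.2.2

theorem sq_sub_sq_eq_integral (hg : H1R g) (z x : ℝ) :
    g x ^ 2 - g z ^ 2 = ∫ t in z..x, 2 * (g t * deriv g t) := by
  refine (intervalIntegral.integral_eq_sub_of_hasDerivAt (f := fun t => g t ^ 2)
    (fun t _ => ?_)
    (hg.integrable_mul_deriv.const_mul 2).intervalIntegrable).symm
  simpa [mul_assoc] using (hg.1 t).hasDerivAt.fun_pow 2

theorem sq_le {R a : ℝ} (hg : H1R g) (hR : 0 < R) (ha : 0 < a) (x : ℝ) :
    g x ^ 2 ≤ (R⁻¹ + a⁻¹) * (∫ t in Icc (x - R) x, g t ^ 2)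
      + a * ∫ t in Icc (x - R) x, deriv g t ^ 2 := by
  set K := Icc (x - R) x
  have hK : volume.real K = R := by simp [K, Real.volume_real_Icc, hR.le]
  obtain ⟨z, hzK, hz⟩ : ∃ z ∈ K, g z ^ 2 ≤ ⨍ t in K, g t ^ 2 :=
    exists_le_setAverage (by simp [K, hR]) measure_Icc_lt_top.ne hg.integrable_sq.integrableOn
  rw [setAverage_eq, hK, smul_eq_mul] at hz
  have young : ∀ t, 2 * (g t * deriv g t) ≤ a⁻¹ * g t ^ 2 + a * deriv g t ^ 2 := fun t => by
    have hsq : a⁻¹ * g t ^ 2 + a * deriv g t ^ 2 - 2 * (g t * deriv g t)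
        = a⁻¹ * (g t - a * deriv g t) ^ 2 := by
      field_simp
      ring
    rw [← sub_nonneg, hsq]
    positivity
  have hbound : Integrable fun t => a⁻¹ * g t ^ 2 + a * deriv g t ^ 2 :=
    (hg.integrable_sq.const_mul _).add (hg.integrable_deriv_sq.const_mul _)
  have hcross : ∫ t in z..x, 2 * (g t * deriv g t)
      ≤ a⁻¹ * (∫ t in K, g t ^ 2) + a * ∫ t in K, deriv g t ^ 2 := by
    rw [intervalIntegral.integral_of_le hzK.2]
    calc ∫ t in Ioc z x, 2 * (g t * deriv g t)
        ≤ ∫ t in Ioc z x, (a⁻¹ * g t ^ 2 + a * deriv g t ^ 2) :=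
          setIntegral_mono (hg.integrable_mul_deriv.const_mul 2).integrableOn
            hbound.integrableOn young
      _ ≤ ∫ t in K, (a⁻¹ * g t ^ 2 + a * deriv g t ^ 2) :=
          setIntegral_mono_set hbound.integrableOn
            (Eventually.of_forall fun t => by positivity)
            (Eventually.of_forall fun t ht => ⟨hzK.1.trans ht.1.le, ht.2⟩)
      _ = a⁻¹ * (∫ t in K, g t ^ 2) + a * ∫ t in K, deriv g t ^ 2 := by
          rw [integral_add (hg.integrable_sq.const_mul _).integrableOn
            (hg.integrable_deriv_sq.const_mul _).integrableOn, integral_const_mul,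
            integral_const_mul]
  linarith [hg.sq_sub_sq_eq_integral z x]

theorem bddAbove_range_sq (hg : H1R g) : BddAbove (range fun x => g x ^ 2) := by
  refine ⟨2 * (∫ t, g t ^ 2) + ∫ t, deriv g t ^ 2, forall_mem_range.2 fun x => ?_⟩
  have hsq := setIntegral_le_integral (s := Icc (x - 1) x) hg.integrable_sq
    (Eventually.of_forall fun t => sq_nonneg (g t))
  have hsq' := setIntegral_le_integral (s := Icc (x - 1) x) hg.integrable_deriv_sq
    (Eventually.of_forall fun t => sq_nonneg (deriv g t))
  have := hg.sq_le one_pos one_pos x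
  norm_num at this
  linarith

end H1R

theorem setIntegral_Icc_le_iSup_setIntegral_Ioo {f : ℝ → ℝ} (hf : Integrable f) (hf0 : 0 ≤ f)
    {R : ℝ} (hR : 0 < R) (x : ℝ) :
    ∫ t in Icc (x - R) x, f t ≤ ⨆ y : ℝ, ∫ t in Ioo (y - R) (y + R), f t := by
  have hbdd : BddAbove (range fun y : ℝ => ∫ t in Ioo (y - R) (y + R), f t) :=
    ⟨∫ t, f t, forall_mem_range.2 fun y => setIntegral_le_integral hf (.of_forall hf0)⟩
  refine le_trans ?_ (le_ciSup hbdd (x - R / 2))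
  exact setIntegral_mono_set hf.integrableOn (.of_forall hf0)
    (Eventually.of_forall fun t ht => ⟨by linarith [ht.1], by linarith [ht.2]⟩)

theorem integral_abs_rpow_le_of_sq_le {g : ℝ → ℝ} {r B : ℝ} (hg : MemLp g 2) (hr : 2 ≤ r)
    (hB : ∀ x, g x ^ 2 ≤ B) :
    ∫ x, |g x| ^ r ≤ B ^ ((r - 2) / 2) * ∫ x, g x ^ 2 := by
  have hpt : ∀ x, |g x| ^ r ≤ B ^ ((r - 2) / 2) * g x ^ 2 := fun x => by
    have hsplit : |g x| ^ r = (g x ^ 2) ^ ((r - 2) / 2) * g x ^ 2 := by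
      rw [← sq_abs, ← Real.rpow_two, ← Real.rpow_mul (abs_nonneg _),
        ← Real.rpow_add_of_nonneg (abs_nonneg _) (by linarith) zero_le_two]
      ring_nf
    rw [hsplit]
    gcongr
    exact hB x
  rw [← integral_const_mul]
  exact integral_mono_of_nonneg (.of_forall fun x => by positivity)
    (hg.integrable_sq.const_mul _) (.of_forall hpt)

theorem tendsto_iSup_sq_of_tendsto_iSup_setIntegral_sq {w : ℕ → ℝ → ℝ}
    (hw : ∀ n, H1R (w n)) {C : ℝ} (hC : ∀ n, ∫ x, deriv (w n) x ^ 2 ≤ C) {R : ℝ} (hR : 0 < R)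
    (hvan : Tendsto (fun n => ⨆ y : ℝ, ∫ x in Ioo (y - R) (y + R), w n x ^ 2) atTop (𝓝 0)) :
    Tendsto (fun n => ⨆ x, w n x ^ 2) atTop (𝓝 0) := by
  have hC0 : 0 ≤ C := (integral_nonneg fun x => sq_nonneg _).trans (hC 0)
  refine tendsto_order.2 ⟨fun b hb => .of_forall fun n =>
    hb.trans_le (Real.iSup_nonneg fun x => sq_nonneg _), fun ε hε => ?_⟩
  set a := ε / (4 * (C + 1))
  have ha : 0 < a := by positivity
  have haC : a * C ≤ ε / 4 := by
    rw [div_mul_eq_mul_div, div_le_div_iff₀ (by positivity) (by norm_num)]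
    nlinarith
  have hmass := ((hvan.const_mul (R⁻¹ + a⁻¹)).eventually_le_const
    (by rw [mul_zero]; positivity : (R⁻¹ + a⁻¹) * 0 < ε / 4))
  filter_upwards [hmass] with n hn
  refine (ciSup_le fun x => ?_).trans_lt (by linarith : ε / 2 < ε)
  have hlocal := setIntegral_Icc_le_iSup_setIntegral_Ioo (hw n).integrable_sq
    (fun t => sq_nonneg (w n t)) hR x
  have hderiv := (setIntegral_le_integral (s := Icc (x - R) x) (hw n).integrable_deriv_sq
    (.of_forall fun t => sq_nonneg (deriv (w n) t))).trans (hC n)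
  calc w n x ^ 2
      ≤ (R⁻¹ + a⁻¹) * (∫ t in Icc (x - R) x, w n t ^ 2)
        + a * ∫ t in Icc (x - R) x, deriv (w n) t ^ 2 := (hw n).sq_le hR ha x
    _ ≤ ε / 4 + ε / 4 :=
        add_le_add ((mul_le_mul_of_nonneg_left hlocal (by positivity)).trans hn)
          ((mul_le_mul_of_nonneg_left hderiv ha.le).trans haC)
    _ = ε / 2 := by ring

/-- Lions' vanishing lemma on `ℝ`: if a bounded sequence in `H¹(ℝ)` has uniformly
vanishing local `L²` mass, then it tends to `0` in every `L^r` with `r > 2`. -/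
theorem vanishing_lemma (w : ℕ → ℝ → ℝ) (hw : ∀ n, H1R (w n))
    (C : ℝ)
    (hbdd : ∀ n, (∫ x : ℝ, (w n x) ^ 2) + (∫ x : ℝ, (deriv (w n) x) ^ 2) ≤ C)
    (R : ℝ) (hR : 0 < R)
    (hvan : Filter.Tendsto
      (fun n => ⨆ y : ℝ, ∫ x in Set.Ioo (y - R) (y + R), (w n x) ^ 2)
      Filter.atTop (nhds 0)) :
    ∀ r : ℝ, 2 < r →
      Filter.Tendsto (fun n => ∫ x : ℝ, |w n x| ^ r) Filter.atTop (nhds 0) := by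
  intro r hr
  have hmass n : ∫ x, w n x ^ 2 ≤ C :=
    le_of_add_le_of_nonneg_left (hbdd n) (integral_nonneg fun x => sq_nonneg _)
  have henergy n : ∫ x, deriv (w n) x ^ 2 ≤ C :=
    le_of_add_le_of_nonneg_right (hbdd n) (integral_nonneg fun x => sq_nonneg _)
  have hsup := tendsto_iSup_sq_of_tendsto_iSup_setIntegral_sq hw henergy hR hvan
  have hlim : Tendsto (fun n => (⨆ x, w n x ^ 2) ^ ((r - 2) / 2) * C) atTop (𝓝 0) := by
    have h := (hsup.rpow_const (p := (r - 2) / 2) (Or.inr (by linarith))).mul_const C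
    rwa [Real.zero_rpow (by linarith), zero_mul] at h
  refine squeeze_zero (fun n => integral_nonneg fun x => by positivity) (fun n => ?_) hlim
  calc ∫ x, |w n x| ^ r
      ≤ (⨆ x, w n x ^ 2) ^ ((r - 2) / 2) * ∫ x, w n x ^ 2 :=
        integral_abs_rpow_le_of_sq_le (hw n).2.1 hr.le fun x =>
          le_ciSup (hw n).bddAbove_range_sq x
    _ ≤ (⨆ x, w n x ^ 2) ^ ((r - 2) / 2) * C := by
        gcongr
        exacts [Real.rpow_nonneg (Real.iSup_nonneg fun x => sq_nonneg _) _, hmass n]
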